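/- arXiv:2505.09070 — 3 statements merged into one kernel-verified Lean document; each statement's English description precedes it below -/
import Mathlib

section
/- Let δ ∈ (0,T), t_0, t_1 ∈ [0, T−δ], λ ∈ [0,1], t_λ = λ t_1 + (1−λ) t_0, and τ̇_i = (T−t_λ)/(T−t_i). Then 0 ≤ λ(1 − 1/√(τ̇_1)) + (1−λ)(1 − 1/√(τ̇_0)) ≤ (1/(4δ²)) λ(1−λ) |t_1 − t_0|². -/
private lemma aux1 (δ a b l : ℝ) (ha : δ ≤ a) (hb : δ ≤ b)
    (hl0 : 0 ≤ l) (hl1 : 0 ≤ 1 - l) : δ ≤ l * a + (1 - l) * b := by nlinarith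

private lemma aux2 (δ a b : ℝ) (hδ : 0 < δ) (ha : δ ≤ a) (hb : δ ≤ b) :
    δ ^ 2 ≤ a * b := by nlinarith

private lemma aux3 (x y l a b : ℝ) (hx : x * x = a) (hy : y * y = b)
    (hl0 : 0 ≤ l) (hl1 : 0 ≤ 1 - l) :
    (l * x + (1 - l) * y) ^ 2 ≤ l * a + (1 - l) * b := by
  nlinarith [sq_nonneg (x - y), mul_nonneg hl0 hl1]

private lemma aux4 (δ x y : ℝ) (hx : δ ≤ x * x) (hy : δ ≤ y * y)
    (hxy : δ ≤ x * y) : 4 * δ ≤ (x + y) ^ 2 := by nlinarith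

private lemma aux5 (δ z x y l : ℝ) (hz : δ ≤ z * z) (hzx : δ ≤ z * x)
    (hzy : δ ≤ z * y) (hl0 : 0 ≤ l) (hl1 : 0 ≤ 1 - l) :
    2 * δ ≤ z * (z + (l * x + (1 - l) * y)) := by
  nlinarith [mul_le_mul_of_nonneg_left hzx hl0, mul_le_mul_of_nonneg_left hzy hl1]

private lemma aux6 (δ p q : ℝ) (hδ : 0 < δ) (hp : 4 * δ ≤ p) (hq : 2 * δ ≤ q) :
    4 * δ ^ 2 ≤ p * q := by nlinarith

/-- second-order estimate on the convex combination of 1 − 1/√τ̇ᵢ. -/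
theorem stmt6 (T δ t0 t1 l : ℝ) (hδ0 : 0 < δ) (hδT : δ < T)
    (ht0 : t0 ∈ Set.Icc 0 (T - δ)) (ht1 : t1 ∈ Set.Icc 0 (T - δ))
    (hl0 : 0 ≤ l) (hl1 : l ≤ 1) :
    0 ≤ l * (1 - (Real.sqrt ((T - (l * t1 + (1 - l) * t0)) / (T - t1)))⁻¹)
        + (1 - l) * (1 - (Real.sqrt ((T - (l * t1 + (1 - l) * t0)) / (T - t0)))⁻¹) ∧
    l * (1 - (Real.sqrt ((T - (l * t1 + (1 - l) * t0)) / (T - t1)))⁻¹)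
        + (1 - l) * (1 - (Real.sqrt ((T - (l * t1 + (1 - l) * t0)) / (T - t0)))⁻¹)
      ≤ (1 / (4 * δ ^ 2)) * (l * (1 - l) * |t1 - t0| ^ 2) := by
  obtain ⟨h00, h01⟩ := ht0
  obtain ⟨h10, h11⟩ := ht1
  have hl1' : 0 ≤ 1 - l := by linarith
  set a := T - t1 with ha
  set b := T - t0 with hb
  have haδ : δ ≤ a := by rw [ha]; linarith
  have hbδ : δ ≤ b := by rw [hb]; linarith
  have ha0 : 0 < a := lt_of_lt_of_le hδ0 haδ
  have hb0 : 0 < b := lt_of_lt_of_le hδ0 hbδ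
  have hc : T - (l * t1 + (1 - l) * t0) = l * a + (1 - l) * b := by rw [ha, hb]; ring
  set c := l * a + (1 - l) * b with hcdef
  have hcδ : δ ≤ c := by rw [hcdef]; exact aux1 δ a b l haδ hbδ hl0 hl1'
  have hc0 : 0 < c := lt_of_lt_of_le hδ0 hcδ
  rw [hc]
  set sa := Real.sqrt a with hsa
  set sb := Real.sqrt b with hsb
  set sc := Real.sqrt c with hsc
  have hsa2 : sa * sa = a := Real.mul_self_sqrt ha0.le
  have hsb2 : sb * sb = b := Real.mul_self_sqrt hb0.le
  have hsc2 : sc * sc = c := Real.mul_self_sqrt hc0.le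
  have hsa0 : 0 < sa := Real.sqrt_pos.mpr ha0
  have hsb0 : 0 < sb := Real.sqrt_pos.mpr hb0
  have hsc0 : 0 < sc := Real.sqrt_pos.mpr hc0
  have hrw1 : (Real.sqrt (c / a))⁻¹ = sa / sc := by
    rw [Real.sqrt_div hc0.le, inv_div]
  have hrw0 : (Real.sqrt (c / b))⁻¹ = sb / sc := by
    rw [Real.sqrt_div hc0.le, inv_div]
  rw [hrw1, hrw0]
  -- products of square roots are at least δ
  have hsaδ : δ ≤ sa * sa := by rw [hsa2]; exact haδ
  have hsbδ : δ ≤ sb * sb := by rw [hsb2]; exact hbδ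
  have hscδ : δ ≤ sc * sc := by rw [hsc2]; exact hcδ
  have hsasb : δ ≤ sa * sb := by
    have h' : sa * sb = Real.sqrt (a * b) := (Real.sqrt_mul ha0.le b).symm
    rw [h', ← Real.sqrt_sq hδ0.le]
    exact Real.sqrt_le_sqrt (aux2 δ a b hδ0 haδ hbδ)
  have hscsa : δ ≤ sc * sa := by
    have h' : sc * sa = Real.sqrt (c * a) := (Real.sqrt_mul hc0.le a).symm
    rw [h', ← Real.sqrt_sq hδ0.le]
    exact Real.sqrt_le_sqrt (aux2 δ c a hδ0 hcδ haδ)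
  have hscsb : δ ≤ sc * sb := by
    have h' : sc * sb = Real.sqrt (c * b) := (Real.sqrt_mul hc0.le b).symm
    rw [h', ← Real.sqrt_sq hδ0.le]
    exact Real.sqrt_le_sqrt (aux2 δ c b hδ0 hcδ hbδ)
  set s := l * sa + (1 - l) * sb with hs
  have hsnn : 0 ≤ s := add_nonneg (mul_nonneg hl0 hsa0.le) (mul_nonneg hl1' hsb0.le)
  have hsle : s ≤ sc := by
    rw [hsc]
    refine (Real.le_sqrt hsnn hc0.le).mpr ?_
    rw [hs, hcdef]
    exact aux3 sa sb l a b hsa2 hsb2 hl0 hl1'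
  have heq : l * (1 - sa / sc) + (1 - l) * (1 - sb / sc) = (sc - s) / sc := by
    rw [hs]; field_simp; ring
  rw [heq]
  refine ⟨div_nonneg (by linarith) hsc0.le, ?_⟩
  rw [div_le_iff₀ hsc0, sq_abs]
  have h4 : (0:ℝ) < 4 * δ ^ 2 := by positivity
  have hscs : 0 < sc + s := by linarith
  rw [← mul_le_mul_iff_of_pos_right hscs]
  have h1 : (sc - s) * (sc + s) = l * (1 - l) * (sa - sb) ^ 2 := by
    rw [hs]; linear_combination hsc2 + hcdef - l * hsa2 - (1 - l) * hsb2
  have hab : sa * sa - sb * sb = t0 - t1 := by rw [hsa2, hsb2, ha, hb]; ring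
  have h2 : (sa - sb) ^ 2 * (sa + sb) ^ 2 = (t1 - t0) ^ 2 := by
    linear_combination (sa * sa - sb * sb + t0 - t1) * hab
  have hN : 0 ≤ l * (1 - l) * (sa - sb) ^ 2 := by positivity
  have hP : 4 * δ ≤ (sa + sb) ^ 2 := aux4 δ sa sb hsaδ hsbδ hsasb
  have hQ : 2 * δ ≤ sc * (sc + s) := by
    rw [hs]; exact aux5 δ sc sa sb l hscδ hscsa hscsb hl0 hl1'
  have hPQ : 4 * δ ^ 2 ≤ (sa + sb) ^ 2 * (sc * (sc + s)) := aux6 δ _ _ hδ0 hP hQ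
  calc (sc - s) * (sc + s) = l * (1 - l) * (sa - sb) ^ 2 := h1
    _ ≤ l * (1 - l) * (sa - sb) ^ 2 * ((sa + sb) ^ 2 * (sc * (sc + s))) / (4 * δ ^ 2) := by
        rw [le_div_iff₀ h4]
        exact mul_le_mul_of_nonneg_left hPQ hN
    _ = 1 / (4 * δ ^ 2) * (l * (1 - l) * (t1 - t0) ^ 2) * sc * (sc + s) := by
        linear_combination (sc * (sc + s) * l * (1 - l) / (4 * δ ^ 2)) * h2
end

section
/- Let g be continuous on [0,T], extended constantly outside [0,T]. Fix δ ∈ (0,T) and suppose there exist ρ ∈ L¹(0, T−δ) and h₂ > 0 such that (g(t+h) − g(t))/h ≤ ρ(t) for almost every t ∈ [0, T−δ) and every h ∈ (0, h₂]. Then for all 0 ≤ α < β ≤ T−δ, g(β) − g(α) ≤ ∫_α^β limsup_{h→0⁺} (g(t+h) − g(t))/h dt. -/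
open MeasureTheory Filter

open Set Topology in
private lemma stmt11_gcont (T : ℝ) (hT : 0 < T) (g : ℝ → ℝ)
    (hg : ContinuousOn g (Set.Icc 0 T))
    (hg0 : ∀ t < (0 : ℝ), g t = g 0) (hgT : ∀ t > T, g t = g T) :
    Continuous g := by
  rw [continuous_iff_continuousAt]
  intro x
  rcases lt_trichotomy x 0 with hx | rfl | hx
  · have h1 : g =ᶠ[𝓝 x] fun _ => g 0 := by
      filter_upwards [Iio_mem_nhds hx] with y hy using hg0 y hy
    exact continuousAt_const.congr h1.symm
  · rw [continuousAt_iff_continuous_left_right]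
    constructor
    · apply (continuousWithinAt_const (b := g 0)).congr
      · intro y hy
        rcases lt_or_eq_of_le (Set.mem_Iic.1 hy) with h | h
        · exact hg0 y h
        · rw [h]
      · rfl
    · have hmem : Icc (0:ℝ) T ∈ 𝓝[Ici (0:ℝ)] 0 := by
        rw [← Ici_inter_Iic]
        exact Filter.inter_mem self_mem_nhdsWithin
          (mem_nhdsWithin_of_mem_nhds (Iic_mem_nhds hT))
      exact (hg.continuousWithinAt (Set.left_mem_Icc.2 hT.le)).mono_of_mem_nhdsWithin hmem
  · rcases lt_trichotomy x T with hxT | heq | hxT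
    · exact hg.continuousAt (Icc_mem_nhds hx hxT)
    · subst heq
      rw [continuousAt_iff_continuous_left_right]
      constructor
      · have hmem : Icc (0:ℝ) x ∈ 𝓝[Iic x] x := by
          rw [← Ici_inter_Iic]
          exact Filter.inter_mem (mem_nhdsWithin_of_mem_nhds (Ici_mem_nhds hx))
            self_mem_nhdsWithin
        exact (hg.continuousWithinAt (Set.right_mem_Icc.2 hx.le)).mono_of_mem_nhdsWithin hmem
      · apply (continuousWithinAt_const (b := g x)).congr
        · intro y hy
          rcases lt_or_eq_of_le (Set.mem_Ici.1 hy) with h | h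
          · exact hgT y h
          · rw [← h]
        · rfl
    · have h1 : g =ᶠ[𝓝 x] fun _ => g T := by
        filter_upwards [Ioi_mem_nhds hxT] with y hy using hgT y hy
      exact continuousAt_const.congr h1.symm

/-- Relation between the real limsup and the `EReal` limsup, given an eventual upper bound. -/
private lemma stmt11_limsup_eq (ψ : ℝ → ℝ) (c : ℝ)
    (hb : ∀ᶠ h in nhdsWithin (0:ℝ) (Set.Ioi 0), ψ h ≤ c) :
    limsup ψ (nhdsWithin (0:ℝ) (Set.Ioi 0))
      = (limsup (fun h => ((ψ h : ℝ) : EReal)) (nhdsWithin (0:ℝ) (Set.Ioi 0))).toReal ∧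
    limsup (fun h => ((ψ h : ℝ) : EReal)) (nhdsWithin (0:ℝ) (Set.Ioi 0)) ≤ (c : EReal) := by
  set F := nhdsWithin (0:ℝ) (Set.Ioi 0) with hF
  set De := limsup (fun h => ((ψ h : ℝ) : EReal)) F with hDe
  have hle : De ≤ (c : EReal) := by
    apply limsup_le_of_le (by isBoundedDefault)
    filter_upwards [hb] with h hh using EReal.coe_le_coe_iff.2 hh
  refine ⟨?_, hle⟩
  have htop : De ≠ ⊤ := ne_top_of_le_ne_top (EReal.coe_ne_top c) hle
  rw [limsup_eq]
  by_cases hbot : De = ⊥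
  · have hall : {a : ℝ | ∀ᶠ x in F, ψ x ≤ a} = Set.univ := by
      apply Set.eq_univ_of_forall
      intro a
      have : ∀ᶠ x in F, ((ψ x : ℝ) : EReal) < (a : EReal) :=
        eventually_lt_of_limsup_lt (by rw [← hDe, hbot]; exact EReal.bot_lt_coe a)
          (by isBoundedDefault)
      filter_upwards [this] with x hx using le_of_lt (EReal.coe_lt_coe_iff.1 hx)
    rw [hall, hbot]
    have : ¬ BddBelow (Set.univ : Set ℝ) := by
      rintro ⟨b, hbd⟩
      have := hbd (Set.mem_univ (b - 1))
      linarith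
    rw [csInf_of_not_bddBelow this, Real.sInf_empty, EReal.toReal_bot]
  · set L := De.toReal with hL
    have hcoe : (L : EReal) = De := EReal.coe_toReal htop hbot
    have hlb : ∀ a ∈ {a : ℝ | ∀ᶠ x in F, ψ x ≤ a}, L ≤ a := by
      intro a ha
      have h1 : De ≤ (a : EReal) := by
        apply limsup_le_of_le (by isBoundedDefault)
        filter_upwards [ha] with x hx using EReal.coe_le_coe_iff.2 hx
      rw [← hcoe] at h1
      exact_mod_cast h1
    have hne : {a : ℝ | ∀ᶠ x in F, ψ x ≤ a}.Nonempty := ⟨c, hb⟩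
    apply le_antisymm
    · apply le_of_forall_pos_le_add
      intro ε hε
      apply csInf_le ⟨L, hlb⟩
      have : De < ((L + ε : ℝ) : EReal) := by
        rw [← hcoe]; exact_mod_cast (by linarith : L < L + ε)
      have h2 := eventually_lt_of_limsup_lt this (by isBoundedDefault)
      exact h2.mono fun x hx => le_of_lt (EReal.coe_lt_coe_iff.1 hx)
    · exact le_csInf hne hlb

open Set Topology in
/-- Measurability of the `EReal`-valued upper right Dini derivative of a continuous function. -/
private lemma stmt11_meas (g : ℝ → ℝ) (hgc : Continuous g) :
    Measurable (fun t => limsup (fun h => (((g (t + h) - g t) / h : ℝ) : EReal))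
      (nhdsWithin (0:ℝ) (Set.Ioi 0))) := by
  have key : ∀ t, limsup (fun h => (((g (t + h) - g t) / h : ℝ) : EReal))
      (nhdsWithin (0:ℝ) (Set.Ioi 0))
      = ⨅ (n : ℕ), ⨆ (q : ℚ), ⨆ (_ : (q:ℝ) ∈ Ioo (0:ℝ) (1/(n+1))),
          (((g (t + q) - g t) / q : ℝ) : EReal) := by
    intro t
    set u : ℝ → EReal := fun h => (((g (t + h) - g t) / h : ℝ) : EReal) with hu
    have hrat : ∀ ε : ℝ, 0 < ε →
        (⨆ h ∈ Ioo (0:ℝ) ε, u h) = ⨆ (q : ℚ) (_ : (q:ℝ) ∈ Ioo (0:ℝ) ε), u q := by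
      intro ε hε
      have hcont : ContinuousOn (fun y => (g (t + y) - g t) / y) (Ioo (0:ℝ) ε) := by
        apply ContinuousOn.div
        · exact ((hgc.comp (continuous_const.add continuous_id)).sub continuous_const).continuousOn
        · exact continuousOn_id
        · exact fun y hy => ne_of_gt hy.1
      apply le_antisymm
      · apply iSup₂_le
        intro h hh
        apply le_of_forall_lt
        intro x hx
        induction x using EReal.rec with
        | bot =>
          obtain ⟨q, hq1, hq2⟩ := exists_rat_btwn hε
          calc (⊥ : EReal) < u q := EReal.bot_lt_coe _
          _ ≤ _ := le_iSup₂ (f := fun (q : ℚ) (_ : (q:ℝ) ∈ Ioo (0:ℝ) ε) => u q) q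
              ⟨by exact_mod_cast hq1, hq2⟩
        | coe x' =>
          have hW : IsOpen {y | y ∈ Ioo (0:ℝ) ε ∧ x' < (g (t + y) - g t) / y} := by
            have h0 : {y | y ∈ Ioo (0:ℝ) ε ∧ x' < (g (t + y) - g t) / y}
                = Ioo (0:ℝ) ε ∩ (fun y => (g (t + y) - g t) / y) ⁻¹' Ioi x' := rfl
            rw [h0]
            exact hcont.isOpen_inter_preimage isOpen_Ioo isOpen_Ioi
          have hne : {y | y ∈ Ioo (0:ℝ) ε ∧ x' < (g (t + y) - g t) / y}.Nonempty :=
            ⟨h, hh, EReal.coe_lt_coe_iff.1 hx⟩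
          rcases Rat.denseRange_cast.exists_mem_open hW hne with ⟨q, hq1, hq2⟩
          calc ((x' : ℝ) : EReal) < u q := EReal.coe_lt_coe_iff.2 hq2
          _ ≤ _ := le_iSup₂ (f := fun (q : ℚ) (_ : (q:ℝ) ∈ Ioo (0:ℝ) ε) => u q) q hq1
        | top => exact absurd hx (not_top_lt)
      · apply iSup₂_le
        intro q hq
        exact le_iSup₂ (f := fun (h : ℝ) (_ : h ∈ Ioo (0:ℝ) ε) => u h) (q : ℝ) hq
    rw [(nhdsGT_basis (0:ℝ)).limsup_eq_iInf_iSup]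
    have hmono : ∀ ε₁ ε₂ : ℝ, ε₁ ≤ ε₂ → (⨆ h ∈ Ioo (0:ℝ) ε₁, u h) ≤ ⨆ h ∈ Ioo (0:ℝ) ε₂, u h :=
      fun ε₁ ε₂ h12 => biSup_mono (Ioo_subset_Ioo_right h12)
    apply le_antisymm
    · apply le_iInf
      intro n
      rw [← hrat _ (by positivity)]
      exact iInf₂_le (1/(n+1 : ℝ)) (by positivity)
    · apply le_iInf₂
      intro ε hε
      obtain ⟨n, hn⟩ := exists_nat_one_div_lt hε
      calc (⨅ (n : ℕ), ⨆ (q : ℚ) (_ : (q:ℝ) ∈ Ioo (0:ℝ) (1/(n+1))), u q)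
          ≤ ⨆ (q : ℚ) (_ : (q:ℝ) ∈ Ioo (0:ℝ) (1/(n+1))), u q := iInf_le _ n
        _ = ⨆ h ∈ Ioo (0:ℝ) (1/(n+1:ℝ)), u h := (hrat _ (by positivity)).symm
        _ ≤ _ := hmono _ _ hn.le
  simp only [key]
  apply Measurable.iInf
  intro n
  apply Measurable.iSup
  intro q
  by_cases hq : (q:ℝ) ∈ Ioo (0:ℝ) (1/(n+1))
  · simp only [hq, iSup_pos]
    exact measurable_coe_real_ereal.comp
      (((hgc.comp (continuous_id.add continuous_const)).sub hgc).div_const _).measurable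
  · simp only [hq, iSup_neg, not_false_iff]
    exact measurable_const

/-- integral estimate via the upper right Dini derivative. -/
theorem stmt11 (T δ : ℝ) (hδ0 : 0 < δ) (hδT : δ < T) (g : ℝ → ℝ)
    (hg : ContinuousOn g (Set.Icc 0 T))
    (hg0 : ∀ t < (0 : ℝ), g t = g 0) (hgT : ∀ t > T, g t = g T)
    (ρ : ℝ → ℝ) (hρ : IntegrableOn ρ (Set.Ioo 0 (T - δ)))
    (h₂ : ℝ) (hh₂ : 0 < h₂)
    (hdom : ∀ᵐ t ∂(volume.restrict (Set.Ico 0 (T - δ))),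
      ∀ h ∈ Set.Ioc (0 : ℝ) h₂, (g (t + h) - g t) / h ≤ ρ t) :
    ∀ α β : ℝ, 0 ≤ α → α < β → β ≤ T - δ →
      g β - g α ≤ ∫ t in α..β,
        limsup (fun h => (g (t + h) - g t) / h) (nhdsWithin 0 (Set.Ioi 0)) := by
  intro α β hα hαβ hβ
  have hT : 0 < T := hδ0.trans hδT
  have hgc : Continuous g := stmt11_gcont T hT g hg hg0 hgT
  set F := nhdsWithin (0:ℝ) (Set.Ioi 0) with hF
  set De : ℝ → EReal := fun t =>
    limsup (fun h => (((g (t + h) - g t) / h : ℝ) : EReal)) F with hDe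
  set D' : ℝ → ℝ := fun t => (De t).toReal with hD'
  set ρ' : ℝ → ℝ := fun t => max (ρ t) 0 with hρ'def
  set μ : Measure ℝ := volume.restrict (Set.Ioo α β) with hμ
  have hsub : Set.Ioo α β ⊆ Set.Ico 0 (T - δ) := fun t ht =>
    ⟨hα.trans ht.1.le, lt_of_lt_of_le ht.2 hβ⟩
  have hdom' : ∀ᵐ t ∂μ, ∀ h ∈ Set.Ioc (0:ℝ) h₂, (g (t + h) - g t) / h ≤ ρ t :=
    ae_restrict_of_ae_restrict_of_subset hsub hdom
  have hIoc : Set.Ioc (0:ℝ) h₂ ∈ F := Ioc_mem_nhdsGT_of_mem ⟨le_refl 0, hh₂⟩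
  have hkey : ∀ t, (∀ h ∈ Set.Ioc (0:ℝ) h₂, (g (t + h) - g t) / h ≤ ρ t) →
      (limsup (fun h => (g (t + h) - g t) / h) F = D' t ∧ De t ≤ (ρ t : EReal)) := by
    intro t ht
    have hev : ∀ᶠ h in F, (g (t + h) - g t) / h ≤ ρ t := by
      filter_upwards [hIoc] with h hh using ht h hh
    exact stmt11_limsup_eq _ _ hev
  have hDemeas : Measurable De := stmt11_meas g hgc
  have hD'meas : Measurable D' := measurable_ereal_toReal.comp hDemeas
  have hρμ : Integrable ρ μ := hρ.mono_set (fun t ht => ⟨hα.trans_lt ht.1, ht.2.trans_le hβ⟩)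
  have hρ'μ : Integrable ρ' μ := hρμ.pos_part
  -- the approximating sequence of difference quotients
  set hn : ℕ → ℝ := fun n => h₂ / (n + 1) with hhn
  have hnpos : ∀ n, 0 < hn n := fun n => by positivity
  have hnle : ∀ n, hn n ≤ h₂ := by
    intro n
    rw [hhn]
    rw [div_le_iff₀ (by positivity)]
    nlinarith [hh₂.le, Nat.cast_nonneg (α := ℝ) n]
  have hn0' : Tendsto hn atTop (nhds 0) := by
    have h2 := tendsto_one_div_add_atTop_nhds_zero_nat.const_mul h₂
    simpa [hhn, mul_one_div, div_eq_mul_inv] using h2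
  have hn0 : Tendsto hn atTop F := by
    apply tendsto_nhdsWithin_of_tendsto_nhds_of_eventually_within _ hn0'
    exact Eventually.of_forall fun n => hnpos n
  set f : ℕ → ℝ → ℝ := fun n t => (g (t + hn n) - g t) / hn n with hfdef
  have hfc : ∀ n, Continuous (f n) := fun n =>
    ((hgc.comp (continuous_id.add continuous_const)).sub hgc).div_const _
  have hfint : ∀ n, Integrable (f n) μ :=
    fun n => ((hfc n).continuousOn.integrableOn_Icc).mono_set Set.Ioo_subset_Icc_self
  -- convergence of the integrals of difference quotients
  set G : ℝ → ℝ := fun x => ∫ s in (0:ℝ)..x, g s with hG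
  have hGd : ∀ x : ℝ, HasDerivAt G (g x) x := fun x => (hgc.integral_hasStrictDerivAt 0 x).hasDerivAt
  have hslope : ∀ x : ℝ, Tendsto (fun n => (G (x + hn n) - G x) / hn n) atTop (nhds (g x)) := by
    intro x
    have h1 := (hasDerivAt_iff_tendsto_slope).1 (hGd x)
    have h2 : Tendsto (fun n => x + hn n) atTop (nhdsWithin x {x}ᶜ) := by
      apply tendsto_nhdsWithin_of_tendsto_nhds_of_eventually_within
      · simpa using tendsto_const_nhds.add hn0'
      · exact Eventually.of_forall fun n =>
          Set.mem_compl_singleton_iff.2 (ne_of_gt (lt_add_of_pos_right x (hnpos n)))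
    have h3 := h1.comp h2
    simp only [Function.comp_def, slope_def_field, add_sub_cancel_left] at h3
    exact h3
  have hIeq : ∀ n, ∫ t, f n t ∂μ
      = (G (β + hn n) - G β) / hn n - (G (α + hn n) - G α) / hn n := by
    intro n
    have hint1 : IntervalIntegrable (fun t => g (t + hn n)) volume α β :=
      (hgc.comp (continuous_id.add continuous_const)).intervalIntegrable α β
    have hint2 : IntervalIntegrable g volume α β := hgc.intervalIntegrable α β
    have e0 : ∫ t, f n t ∂μ = ∫ t in α..β, (g (t + hn n) - g t) / hn n := by
      rw [intervalIntegral.integral_of_le hαβ.le, integral_Ioc_eq_integral_Ioo]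
    rw [e0, intervalIntegral.integral_div, intervalIntegral.integral_sub hint1 hint2,
      intervalIntegral.integral_comp_add_right]
    have e1 : (∫ x in α + hn n..β + hn n, g x) = G (β + hn n) - G (α + hn n) :=
      (intervalIntegral.integral_interval_sub_left (hgc.intervalIntegrable _ _)
        (hgc.intervalIntegrable _ _)).symm
    have e2 : (∫ x in α..β, g x) = G β - G α :=
      (intervalIntegral.integral_interval_sub_left (hgc.intervalIntegrable _ _)
        (hgc.intervalIntegrable _ _)).symm
    rw [e1, e2]
    ring
  have Iconv : Tendsto (fun n => ∫ t, f n t ∂μ) atTop (nhds (g β - g α)) := by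
    simp only [hIeq]
    exact (hslope β).sub (hslope α)
  have hfle : ∀ n, ∀ᵐ t ∂μ, f n t ≤ ρ' t := by
    intro n
    filter_upwards [hdom'] with t ht
    exact le_trans (ht (hn n) ⟨hnpos n, hnle n⟩) (le_max_left _ _)
  have hgβα : g β - g α ≤ ∫ t, ρ' t ∂μ := by
    apply le_of_tendsto Iconv
    exact Eventually.of_forall fun n => integral_mono_ae (hfint n) hρ'μ (hfle n)
  have hae : ∀ᵐ t ∂μ,
      (limsup (fun h => (g (t + h) - g t) / h) F = D' t) ∧ De t ≤ ((ρ t : ℝ) : EReal) := by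
    filter_upwards [hdom'] with t ht
    exact hkey t ht
  have hD'le : ∀ᵐ t ∂μ, D' t ≤ ρ' t := by
    filter_upwards [hae] with t ht
    obtain ⟨h1, h2⟩ := ht
    by_cases hb : De t = ⊥
    · have : D' t = 0 := by simp [hD', hb]
      rw [this]
      exact le_max_right _ _
    · have h3 : D' t ≤ ρ t := by
        have := EReal.toReal_le_toReal h2 hb (EReal.coe_ne_top _)
        simpa using this
      exact h3.trans (le_max_left _ _)
  -- Fatou argument
  set Gn : ℕ → ℝ → ENNReal := fun n t => ENNReal.ofReal (ρ' t - f n t) with hGndef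
  have hGmeas : ∀ n, AEMeasurable (Gn n) μ := fun n =>
    ENNReal.measurable_ofReal.comp_aemeasurable
      ((hρ'μ.aemeasurable).sub (hfc n).measurable.aemeasurable)
  have hFatou := lintegral_liminf_le' (u := atTop) hGmeas
  have hnn' : ∀ n, 0 ≤ᵐ[μ] fun t => ρ' t - f n t := by
    intro n
    filter_upwards [hfle n] with t ht
    simp only [Pi.zero_apply, sub_nonneg]
    exact ht
  have hRHS : ∀ n, ∫⁻ t, Gn n t ∂μ = ENNReal.ofReal ((∫ t, ρ' t ∂μ) - ∫ t, f n t ∂μ) := by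
    intro n
    have hx := ofReal_integral_eq_lintegral_ofReal ((hρ'μ.sub (hfint n))) (hnn' n)
    simp only [Pi.sub_apply] at hx
    rw [integral_sub hρ'μ (hfint n)] at hx
    rw [← hx]
  have hliminfR : liminf (fun n => ∫⁻ t, Gn n t ∂μ) atTop
      = ENNReal.ofReal ((∫ t, ρ' t ∂μ) - (g β - g α)) := by
    simp only [hRHS]
    apply Tendsto.liminf_eq
    exact (ENNReal.continuous_ofReal.tendsto _).comp (tendsto_const_nhds.sub Iconv)
  have hpt : ∀ᵐ t ∂μ, ENNReal.ofReal (ρ' t - D' t) ≤ liminf (fun n => Gn n t) atTop := by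
    filter_upwards [hae] with t ht
    obtain ⟨h1, h2⟩ := ht
    have hseq : limsup (fun n => ((f n t : ℝ) : EReal)) atTop ≤ De t := by
      have hm : map hn atTop ≤ F := hn0
      calc limsup (fun n => ((f n t : ℝ) : EReal)) atTop
          = limsup (fun h => (((g (t + h) - g t) / h : ℝ) : EReal)) (map hn atTop) :=
            limsup_comp _ _ _
        _ ≤ De t := limsup_le_limsup_of_le hm
    by_cases hb : De t = ⊥
    · have hz : D' t = 0 := by simp [hD', hb]
      rw [hz, sub_zero]
      apply le_liminf_of_le (by isBoundedDefault)
      have hev : ∀ᶠ n in atTop, ((f n t : ℝ) : EReal) < (((0:ℝ) : ℝ) : EReal) :=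
        eventually_lt_of_limsup_lt (lt_of_le_of_lt (hb ▸ hseq) (EReal.bot_lt_coe 0))
          (by isBoundedDefault)
      filter_upwards [hev] with n hn'
      have hfn : f n t ≤ 0 := le_of_lt (EReal.coe_lt_coe_iff.1 hn')
      exact ENNReal.ofReal_le_ofReal (by linarith)
    · have hcoe : ((D' t : ℝ) : EReal) = De t :=
        EReal.coe_toReal (ne_top_of_le_ne_top (EReal.coe_ne_top _) h2) hb
      apply ENNReal.le_of_forall_pos_le_add
      intro ε hε _
      have hεR : (0:ℝ) < (ε : ℝ) := by exact_mod_cast hε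
      have hlt : limsup (fun n => ((f n t : ℝ) : EReal)) atTop < ((D' t + ε : ℝ) : EReal) := by
        apply lt_of_le_of_lt hseq
        rw [← hcoe]
        exact_mod_cast (by linarith : D' t < D' t + (ε:ℝ))
      have hev := eventually_lt_of_limsup_lt hlt (by isBoundedDefault)
      have hlb : ENNReal.ofReal (ρ' t - D' t - ε) ≤ liminf (fun n => Gn n t) atTop := by
        apply le_liminf_of_le (by isBoundedDefault)
        filter_upwards [hev] with n hn'
        have hfn : f n t < D' t + ε := EReal.coe_lt_coe_iff.1 hn'
        exact ENNReal.ofReal_le_ofReal (by linarith)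
      calc ENNReal.ofReal (ρ' t - D' t)
          = ENNReal.ofReal ((ρ' t - D' t - ε) + ε) := by ring_nf
        _ ≤ ENNReal.ofReal (ρ' t - D' t - ε) + ENNReal.ofReal (ε:ℝ) := ENNReal.ofReal_add_le
        _ ≤ liminf (fun n => Gn n t) atTop + (ε : ENNReal) := by
            rw [ENNReal.ofReal_coe_nnreal]
            exact add_le_add_left hlb _
  have hlint : ∫⁻ t, ENNReal.ofReal (ρ' t - D' t) ∂μ
      ≤ ENNReal.ofReal ((∫ t, ρ' t ∂μ) - (g β - g α)) := by
    calc ∫⁻ t, ENNReal.ofReal (ρ' t - D' t) ∂μ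
        ≤ ∫⁻ t, liminf (fun n => Gn n t) atTop ∂μ := lintegral_mono_ae hpt
      _ ≤ liminf (fun n => ∫⁻ t, Gn n t ∂μ) atTop := hFatou
      _ = _ := hliminfR
  have hsm : AEStronglyMeasurable (fun t => ρ' t - D' t) μ :=
    hρ'μ.aestronglyMeasurable.sub hD'meas.stronglyMeasurable.aestronglyMeasurable
  have hnn : 0 ≤ᵐ[μ] fun t => ρ' t - D' t := by
    filter_upwards [hD'le] with t ht
    simp only [Pi.zero_apply, sub_nonneg]
    exact ht
  have hfin : HasFiniteIntegral (fun t => ρ' t - D' t) μ := by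
    rw [hasFiniteIntegral_iff_ofReal hnn]
    exact lt_of_le_of_lt hlint ENNReal.ofReal_lt_top
  have hsint : Integrable (fun t => ρ' t - D' t) μ := ⟨hsm, hfin⟩
  have hD'int : Integrable D' μ := by
    have he : D' = fun t => ρ' t - (ρ' t - D' t) := by funext t; ring
    rw [he]
    exact hρ'μ.sub hsint
  have h1 : ENNReal.ofReal (∫ t, (ρ' t - D' t) ∂μ)
      ≤ ENNReal.ofReal ((∫ t, ρ' t ∂μ) - (g β - g α)) := by
    rw [ofReal_integral_eq_lintegral_ofReal hsint hnn]
    exact hlint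
  have h2 : (∫ t, (ρ' t - D' t) ∂μ) ≤ (∫ t, ρ' t ∂μ) - (g β - g α) := by
    rw [ENNReal.ofReal_le_ofReal_iff (by linarith)] at h1
    exact h1
  rw [integral_sub hρ'μ hD'int] at h2
  have hfinal : g β - g α ≤ ∫ t, D' t ∂μ := by linarith
  rw [intervalIntegral.integral_of_le hαβ.le, integral_Ioc_eq_integral_Ioo]
  calc g β - g α ≤ ∫ t, D' t ∂μ := hfinal
    _ = ∫ t in Set.Ioo α β,
        limsup (fun h => (g (t + h) - g t) / h) F ∂volume := by
        apply integral_congr_ae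
        filter_upwards [hae] with t ht
        exact ht.1.symm
end

section
/- Let b : [0,T] × ℝⁿ → ℝⁿ be bounded, differentiable in (t,x), with ∂_t b and ∂_x b bounded and Lipschitz continuous in (t,x) (uniformly on [0,T] × ℝⁿ). Fix δ ∈ (0,T). Then there exists a constant C (depending only on δ, T, and the bounds and Lipschitz constants) such that for all t_0, t_1 ∈ [0, T−δ], λ ∈ [0,1], r ∈ [t_λ, T], and X_0, X_1 ∈ ℝⁿ: ‖ (λ/τ̇_1) b(ϱ_1(r), X_1) + ((1−λ)/τ̇_0) b(ϱ_0(r), X_0) − b(r, λX_1 + (1−λ)X_0) ‖ ≤ C λ(1−λ) ( |t_1 − t_0|² + ‖X_1 − X_0‖² ), where t_λ = λ t_1 + (1−λ) t_0, τ̇_i = (T−t_λ)/(T−t_i), and ϱ_i(r) = t_i + ((T−t_i)/(T−t_λ))(r−t_λ). -/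
lemma taylor_sq {E F : Type*} [NormedAddCommGroup E] [NormedSpace ℝ E]
    [NormedAddCommGroup F] [NormedSpace ℝ F]
    (f : E → F) (hf : Differentiable ℝ f) (L : NNReal)
    (hlip : LipschitzWith L (fderiv ℝ f)) (x y : E) :
    ‖f y - f x - fderiv ℝ f x (y - x)‖ ≤ L * (‖y - x‖ * ‖y - x‖) := by
  have hconv : Convex ℝ (segment ℝ x y) := convex_segment x y
  have hbound : ∀ z ∈ segment ℝ x y, ‖fderiv ℝ f z - fderiv ℝ f x‖ ≤ L * ‖y - x‖ := by
    rintro z ⟨a, c, ha, hc, hac, rfl⟩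
    have h1 : a • x + c • y - x = c • (y - x) := by
      have ha' : a = 1 - c := by linarith
      rw [ha', sub_smul, smul_sub, one_smul]; abel
    calc ‖fderiv ℝ f (a • x + c • y) - fderiv ℝ f x‖
        ≤ L * ‖a • x + c • y - x‖ := by
          simpa [dist_eq_norm] using hlip.dist_le_mul (a • x + c • y) x
      _ = L * (c * ‖y - x‖) := by rw [h1, norm_smul, Real.norm_of_nonneg hc]
      _ ≤ L * (1 * ‖y - x‖) := by
          have hc1 : c ≤ 1 := by linarith
          gcongr
      _ = L * ‖y - x‖ := by ring
  have := hconv.norm_image_sub_le_of_norm_fderiv_le'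
    (fun z _ => hf z) hbound (left_mem_segment ℝ x y) (right_mem_segment ℝ x y)
  calc ‖f y - f x - (fderiv ℝ f x) (y - x)‖ ≤ L * ‖y - x‖ * ‖y - x‖ := this
    _ = L * (‖y - x‖ * ‖y - x‖) := by ring

lemma sq_helper (a c x : ℝ) (ha : 0 ≤ a) (hc : 0 ≤ c) (hx : 0 ≤ x)
    (h : x ≤ a ∨ x ≤ c) : x * x ≤ a ^ 2 + c ^ 2 ∧ a * x ≤ a ^ 2 + c ^ 2 := by
  rcases h with h | h
  · constructor <;> nlinarith
  · constructor <;> nlinarith [sq_nonneg (a - c), mul_le_mul_of_nonneg_left h ha]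

set_option maxHeartbeats 1000000 in
/-- second-order estimate on the convex recombination of a smooth drift
coefficient under the Kulik time changes. -/
theorem stmt16 (n : ℕ) (T δ : ℝ) (hδ0 : 0 < δ) (hδT : δ < T)
    (b : ℝ × EuclideanSpace ℝ (Fin n) → EuclideanSpace ℝ (Fin n))
    (M : ℝ) (hbd : ∀ q, ‖b q‖ ≤ M)
    (hdiff : Differentiable ℝ b)
    (M' : ℝ) (hder : ∀ q, ‖fderiv ℝ b q‖ ≤ M')
    (L : NNReal) (hlip : LipschitzWith L (fderiv ℝ b)) :
    ∃ C : ℝ, 0 ≤ C ∧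
      ∀ t0 ∈ Set.Icc (0 : ℝ) (T - δ), ∀ t1 ∈ Set.Icc (0 : ℝ) (T - δ),
      ∀ l ∈ Set.Icc (0 : ℝ) 1,
      ∀ r ∈ Set.Icc (l * t1 + (1 - l) * t0) T,
      ∀ X0 X1 : EuclideanSpace ℝ (Fin n),
        ‖(l / ((T - (l * t1 + (1 - l) * t0)) / (T - t1))) •
            b (t1 + ((T - t1) / (T - (l * t1 + (1 - l) * t0))) * (r - (l * t1 + (1 - l) * t0)), X1)
          + ((1 - l) / ((T - (l * t1 + (1 - l) * t0)) / (T - t0))) •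
            b (t0 + ((T - t0) / (T - (l * t1 + (1 - l) * t0))) * (r - (l * t1 + (1 - l) * t0)), X0)
          - b (r, l • X1 + (1 - l) • X0)‖
        ≤ C * (l * (1 - l)) * (|t1 - t0| ^ 2 + ‖X1 - X0‖ ^ 2) := by
  have hM' : 0 ≤ M' := le_trans (norm_nonneg _) (hder (0, 0))
  refine ⟨L + M' / δ, by positivity, ?_⟩
  rintro t0 ⟨ht00, ht01⟩ t1 ⟨ht10, ht11⟩ l ⟨hl0, hl1⟩ r ⟨hrl, hrT⟩ X0 X1
  set tl := l * t1 + (1 - l) * t0 with htl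
  have hl1' : 0 ≤ 1 - l := by linarith
  have hsδ : δ ≤ T - tl := by rw [htl]; nlinarith
  have hs0 : 0 < T - tl := lt_of_lt_of_le hδ0 hsδ
  have hT1 : 0 < T - t1 := by linarith
  have hT0 : 0 < T - t0 := by linarith
  set r1 := t1 + (T - t1) / (T - tl) * (r - tl) with hr1
  set r0 := t0 + (T - t0) / (T - tl) * (r - tl) with hr0
  set Xl := l • X1 + (1 - l) • X0 with hXl
  set e := l * (1 - l) * (t1 - t0) / (T - tl) with he
  -- scalar identities
  have hc1 : l / ((T - tl) / (T - t1)) = l - e := by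
    rw [he, htl]; field_simp [show T - (l * t1 + (1 - l) * t0) ≠ 0 from hs0.ne']; ring
  have hc0 : (1 - l) / ((T - tl) / (T - t0)) = (1 - l) + e := by
    rw [he, htl]; field_simp [show T - (l * t1 + (1 - l) * t0) ≠ 0 from hs0.ne']; ring
  have hA : l * r1 + (1 - l) * r0 = r := by
    rw [hr1, hr0, htl]; field_simp [show T - (l * t1 + (1 - l) * t0) ≠ 0 from hs0.ne']; ring
  have hr10 : r1 - r0 = (t1 - t0) * ((T - r) / (T - tl)) := by
    rw [hr1, hr0]; field_simp; ring
  have habs10 : |r1 - r0| ≤ |t1 - t0| := by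
    rw [hr10, abs_mul]
    have h1 : |(T - r) / (T - tl)| ≤ 1 := by
      rw [abs_div, abs_of_nonneg (by linarith : (0:ℝ) ≤ T - r), abs_of_pos hs0]
      rw [div_le_one hs0]; linarith
    calc |t1 - t0| * |(T - r) / (T - tl)| ≤ |t1 - t0| * 1 := by
          gcongr
      _ = |t1 - t0| := mul_one _
  -- vector identities
  have hq1q : ((r1, X1) : ℝ × EuclideanSpace ℝ (Fin n)) - (r, Xl)
      = (1 - l) • ((r1, X1) - (r0, X0)) := by
    simp only [Prod.mk_sub_mk, Prod.smul_mk, Prod.mk.injEq, smul_eq_mul]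
    refine ⟨by linear_combination hA, by rw [hXl]; module⟩
  have hq0q : ((r0, X0) : ℝ × EuclideanSpace ℝ (Fin n)) - (r, Xl)
      = (-l) • ((r1, X1) - (r0, X0)) := by
    simp only [Prod.mk_sub_mk, Prod.smul_mk, Prod.mk.injEq, smul_eq_mul]
    refine ⟨by linear_combination hA, by rw [hXl]; module⟩
  set D := fderiv ℝ b (r, Xl) with hD
  have hsum0 : l • (((r1, X1) : ℝ × EuclideanSpace ℝ (Fin n)) - (r, Xl))
      + (1 - l) • (((r0, X0) : ℝ × EuclideanSpace ℝ (Fin n)) - (r, Xl)) = 0 := by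
    rw [hq1q, hq0q]; module
  have hD0 : l • (D ((r1, X1) - (r, Xl))) + (1 - l) • (D ((r0, X0) - (r, Xl))) = 0 := by
    rw [← map_smul, ← map_smul, ← map_add, hsum0, map_zero]
  set β1 := b (r1, X1) - b (r, Xl) - D ((r1, X1) - (r, Xl)) with hβ1
  set β0 := b (r0, X0) - b (r, Xl) - D ((r0, X0) - (r, Xl)) with hβ0
  have hkey : (l - e) • b (r1, X1) + ((1 - l) + e) • b (r0, X0) - b (r, Xl)
      = l • β1 + (1 - l) • β0 - e • (b (r1, X1) - b (r0, X0)) := by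
    have hexp : l • β1 + (1 - l) • β0 - e • (b (r1, X1) - b (r0, X0))
        = (l - e) • b (r1, X1) + ((1 - l) + e) • b (r0, X0) - b (r, Xl)
          - (l • (D ((r1, X1) - (r, Xl))) + (1 - l) • (D ((r0, X0) - (r, Xl)))) := by
      rw [hβ1, hβ0]; module
    rw [hexp, hD0, sub_zero]
  -- norm estimates
  set N := ‖((r1, X1) : ℝ × EuclideanSpace ℝ (Fin n)) - (r0, X0)‖ with hN
  have hN0 : 0 ≤ N := norm_nonneg _
  have hβ1n : ‖β1‖ ≤ L * (((1 - l) * N) * ((1 - l) * N)) := by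
    have h := taylor_sq b hdiff L hlip (r, Xl) (r1, X1)
    rw [← hD, ← hβ1] at h
    rwa [hq1q, norm_smul, Real.norm_of_nonneg hl1', ← hN] at h
  have hβ0n : ‖β0‖ ≤ L * ((l * N) * (l * N)) := by
    have h := taylor_sq b hdiff L hlip (r, Xl) (r0, X0)
    rw [← hD, ← hβ0] at h
    rw [hq0q, norm_smul] at h
    rwa [Real.norm_eq_abs, abs_neg, abs_of_nonneg hl0, ← hN] at h
  have hbb : ‖b (r1, X1) - b (r0, X0)‖ ≤ M' * N := by
    have := convex_univ.norm_image_sub_le_of_norm_fderiv_le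
      (f := b) (C := M') (fun z _ => hdiff z) (fun z _ => hder z)
      (Set.mem_univ ((r0, X0) : ℝ × EuclideanSpace ℝ (Fin n)))
      (Set.mem_univ ((r1, X1) : ℝ × EuclideanSpace ℝ (Fin n)))
    rwa [← hN] at this
  have hNle : N ≤ |t1 - t0| ∨ N ≤ ‖X1 - X0‖ := by
    have hsub : ((r1, X1) : ℝ × EuclideanSpace ℝ (Fin n)) - (r0, X0) = (r1 - r0, X1 - X0) :=
      Prod.mk_sub_mk r1 r0 X1 X0
    have hNeq : N = max |r1 - r0| ‖X1 - X0‖ := by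
      rw [hN, hsub, Prod.norm_def, Real.norm_eq_abs]
    have : N ≤ max |t1 - t0| ‖X1 - X0‖ := by
      rw [hNeq]; exact max_le_max habs10 le_rfl
    exact le_max_iff.mp this
  have hN2 : N * N ≤ |t1 - t0| ^ 2 + ‖X1 - X0‖ ^ 2 :=
    (sq_helper _ _ _ (abs_nonneg _) (norm_nonneg _) hN0 hNle).1
  have hNt : |t1 - t0| * N ≤ |t1 - t0| ^ 2 + ‖X1 - X0‖ ^ 2 :=
    (sq_helper _ _ _ (abs_nonneg _) (norm_nonneg _) hN0 hNle).2
  have he' : |e| ≤ l * (1 - l) * |t1 - t0| / δ := by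
    rw [he, abs_div, abs_mul, abs_mul, abs_of_nonneg hl0, abs_of_nonneg hl1',
      abs_of_pos hs0]
    gcongr
  have he0 : 0 ≤ l * (1 - l) * |t1 - t0| / δ := by positivity
  -- assemble
  rw [hc1, hc0, hkey]
  have step1 : ‖l • β1 + (1 - l) • β0 - e • (b (r1, X1) - b (r0, X0))‖
      ≤ l * ‖β1‖ + (1 - l) * ‖β0‖ + |e| * ‖b (r1, X1) - b (r0, X0)‖ := by
    calc ‖l • β1 + (1 - l) • β0 - e • (b (r1, X1) - b (r0, X0))‖
        ≤ ‖l • β1 + (1 - l) • β0‖ + ‖e • (b (r1, X1) - b (r0, X0))‖ := norm_sub_le _ _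
      _ ≤ ‖l • β1‖ + ‖(1 - l) • β0‖ + ‖e • (b (r1, X1) - b (r0, X0))‖ :=
          add_le_add_left (norm_add_le _ _) _
      _ = l * ‖β1‖ + (1 - l) * ‖β0‖ + |e| * ‖b (r1, X1) - b (r0, X0)‖ := by
          rw [norm_smul, norm_smul, norm_smul, Real.norm_eq_abs, Real.norm_eq_abs,
            Real.norm_eq_abs, abs_of_nonneg hl0, abs_of_nonneg hl1']
  have step2 : l * ‖β1‖ + (1 - l) * ‖β0‖ + |e| * ‖b (r1, X1) - b (r0, X0)‖
      ≤ l * (L * (((1 - l) * N) * ((1 - l) * N))) + (1 - l) * (L * ((l * N) * (l * N)))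
        + (l * (1 - l) * |t1 - t0| / δ) * (M' * N) := by
    gcongr
  have hmδ : 0 ≤ M' / δ := by positivity
  have hL0 : (0 : ℝ) ≤ L := L.coe_nonneg
  have f1 : (L : ℝ) * (l * (1 - l)) * ((|t1 - t0| ^ 2 + ‖X1 - X0‖ ^ 2) - N * N) ≥ 0 := by
    apply mul_nonneg (mul_nonneg hL0 (mul_nonneg hl0 hl1')); linarith
  have f2 : (M' / δ) * (l * (1 - l)) * ((|t1 - t0| ^ 2 + ‖X1 - X0‖ ^ 2) - |t1 - t0| * N) ≥ 0 := by
    apply mul_nonneg (mul_nonneg hmδ (mul_nonneg hl0 hl1')); linarith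
  calc ‖l • β1 + (1 - l) • β0 - e • (b (r1, X1) - b (r0, X0))‖
      ≤ l * (L * (((1 - l) * N) * ((1 - l) * N))) + (1 - l) * (L * ((l * N) * (l * N)))
        + (l * (1 - l) * |t1 - t0| / δ) * (M' * N) := le_trans step1 step2
    _ = (↑L + M' / δ) * (l * (1 - l)) * (|t1 - t0| ^ 2 + ‖X1 - X0‖ ^ 2)
          - (L : ℝ) * (l * (1 - l)) * ((|t1 - t0| ^ 2 + ‖X1 - X0‖ ^ 2) - N * N)
          - (M' / δ) * (l * (1 - l)) * ((|t1 - t0| ^ 2 + ‖X1 - X0‖ ^ 2) - |t1 - t0| * N) := by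
        ring
    _ ≤ (↑L + M' / δ) * (l * (1 - l)) * (|t1 - t0| ^ 2 + ‖X1 - X0‖ ^ 2) := by
        linarith [f1, f2]
end
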